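/- arXiv:2405.12152 — 3 statements merged into one kernel-verified Lean document; each statement's English description precedes it below -/
import Mathlib

section
/- Fix real numbers $a, b, W$ with $0 \le a < b$ and $W > 0$. Let $x_1, x_2, \ldots$ be sampled uniformly and independently from the interval $(W/2, W)$. Then the probability that there exists an index $j$ such that $\sum_{i \le j} x_i \in [a, b]$ is at most $4(b-a)/W$. -/
open MeasureTheory ProbabilityTheory Set
open scoped ENNReal

/-!
Almost surely every step lies in `(W/2, W)`. Since `0 ≤ a` and the steps are at most `W`,
a walk that enters `[a, b]` does so for the first time from some partial sum `S k ∈ [a - W, a]`,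
and given `S k` (independent of the next step `x k`) the step lands in `[a, b]` with probability
at most `(b - a) / (W/2)`. As the steps exceed `W/2`, at most two partial sums lie in the window
`[a - W, a]` of length `W`, so the expected number of indices `k` with `S k ∈ [a - W, a]` is at
most `2`. Summing over `k` gives `2 · 2(b - a)/W`.
-/

lemma encard_setOf_sum_range_mem_Icc_le_two {y : ℕ → ℝ} {δ u v : ℝ} (hy : ∀ i, δ < y i)
    (huv : v - u ≤ 2 * δ) : {k | ∑ i ∈ Finset.range k, y i ∈ Icc u v}.encard ≤ 2 := by
  classical
  set s : ℕ → ℝ := fun k => ∑ i ∈ Finset.range k, y i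
  have hs : ∀ k, s k + δ < s (k + 1) := fun k => by
    simp only [s, Finset.sum_range_succ]; linarith [hy k]
  change {k | s k ∈ Icc u v}.encard ≤ 2
  by_cases hne : ∃ k, s k ∈ Icc u v
  · obtain ⟨hmu, hmv⟩ := Nat.find_spec hne
    set m := Nat.find hne
    have hδ : 0 ≤ δ := by linarith
    have hmono : Monotone s := monotone_nat_of_le_succ fun k => by linarith [hs k]
    have hsub : {k | s k ∈ Icc u v} ⊆ {m, m + 1} := by
      rintro k ⟨hku, hkv⟩
      have hmk : m ≤ k := Nat.find_min' hne ⟨hku, hkv⟩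
      by_contra hk
      simp only [mem_insert_iff, mem_singleton_iff] at hk
      have h2 : s (m + 2) ≤ s k := hmono (by omega)
      linarith [hs m, hs (m + 1)]
    calc {k | s k ∈ Icc u v}.encard ≤ ({m, m + 1} : Set ℕ).encard := encard_le_encard hsub
      _ = 2 := encard_pair (by omega)
  · push Not at hne
    simp only [hne, ofPred_false, encard_empty, zero_le]

/-- Just before its first entrance into `[a, b]`, the walk is still at most `a`. -/
lemma exists_sum_range_mem_Icc_sub_and_add_mem_Icc {y : ℕ → ℝ} {a b W : ℝ} (ha : 0 ≤ a)
    (hy : ∀ i, y i ∈ Icc 0 W) (hhit : ∃ j, ∑ i ∈ Finset.range (j + 1), y i ∈ Icc a b) :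
    ∃ k, ∑ i ∈ Finset.range k, y i ∈ Icc (a - W) a ∧
      ∑ i ∈ Finset.range k, y i + y k ∈ Icc a b := by
  classical
  simp only [Finset.sum_range_succ] at hhit ⊢
  obtain ⟨k, ⟨hka, hkb⟩, hmin⟩ : ∃ k, ∑ i ∈ Finset.range k, y i + y k ∈ Icc a b ∧
      ∀ j < k, ∑ i ∈ Finset.range j, y i + y j ∉ Icc a b :=
    ⟨Nat.find hhit, Nat.find_spec hhit, fun j => Nat.find_min hhit⟩
  refine ⟨k, ⟨by linarith [(hy k).2], ?_⟩, hka, hkb⟩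
  cases k with
  | zero => simpa using ha
  | succ j =>
    rw [Finset.sum_range_succ] at hkb ⊢
    by_contra! hja
    exact hmin j j.lt_succ_self ⟨hja.le, by linarith [(hy (j + 1)).1]⟩

lemma tsum_measure_le_of_ae_encard_le {α ι : Type*} [MeasurableSpace α] [Countable ι]
    {μ : Measure α} {s : ι → Set α} (hs : ∀ i, MeasurableSet (s i)) {n : ℕ∞}
    (h : ∀ᵐ x ∂μ, {i | x ∈ s i}.encard ≤ n) : ∑' i, μ (s i) ≤ n * μ univ := by
  have hcount : ∀ x, ∑' i, (s i).indicator 1 x = ({i | x ∈ s i}.encard : ℝ≥0∞) := fun x => by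
    rw [← ENNReal.tsum_set_one]
    exact (tsum_subtype _ _).symm
  calc ∑' i, μ (s i) = ∫⁻ x, ∑' i, (s i).indicator 1 x ∂μ := by
        rw [lintegral_tsum fun i => (measurable_one.indicator (hs i)).aemeasurable]
        simp_rw [lintegral_indicator_one (hs _)]
    _ ≤ ∫⁻ _, (n : ℝ≥0∞) ∂μ := lintegral_mono_ae <| h.mono fun x hx => by
        rw [hcount]; exact_mod_cast hx
    _ = n * μ univ := lintegral_const _

section Probability

variable {Ω : Type*} [MeasurableSpace Ω] {μ : Measure Ω}

lemma MeasureTheory.pdf.IsUniform.ae_mem {E : Type*} [MeasurableSpace E] {ν : Measure E}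
    {X : Ω → E} {s : Set E} (hu : pdf.IsUniform X s μ ν) (hns : ν s ≠ 0) (hnt : ν s ≠ ∞)
    (hs : MeasurableSet s) : ∀ᵐ ω ∂μ, X ω ∈ s := by
  rw [ae_iff]
  change μ (X ⁻¹' sᶜ) = 0
  rw [hu.measure_preimage hns hnt hs.compl, inter_compl_self, measure_empty, ENNReal.zero_div]

lemma MeasureTheory.pdf.IsUniform.measure_const_add_mem_le {X : Ω → ℝ} {s : Set ℝ}
    (hu : pdf.IsUniform X s μ) (hns : volume s ≠ 0) (hnt : volume s ≠ ∞) {A : Set ℝ}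
    (hA : MeasurableSet A) (t : ℝ) :
    μ {ω | t + X ω ∈ A} ≤ volume A / volume s := by
  change μ (X ⁻¹' ((t + ·) ⁻¹' A)) ≤ _
  rw [hu.measure_preimage hns hnt (measurable_const_add t hA)]
  refine ENNReal.div_le_div_right ?_ _
  exact (measure_mono inter_subset_right).trans_eq (measure_preimage_add volume t A)

lemma MeasureTheory.pdf.IsUniform.measure_const_add_mem_Icc_le {X : Ω → ℝ} {c d : ℝ} (hcd : c < d)
    (hu : pdf.IsUniform X (Ioo c d) μ) (a b t : ℝ) :
    μ {ω | t + X ω ∈ Icc a b} ≤ ENNReal.ofReal ((b - a) / (d - c)) := by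
  have hcd' : 0 < d - c := sub_pos.2 hcd
  calc μ {ω | t + X ω ∈ Icc a b} ≤ volume (Icc a b) / volume (Ioo c d) :=
        hu.measure_const_add_mem_le ((Measure.measure_Ioo_pos _).2 hcd).ne' measure_Ioo_lt_top.ne
          measurableSet_Icc t
    _ = ENNReal.ofReal ((b - a) / (d - c)) := by
        rw [Real.volume_Icc, Real.volume_Ioo, ENNReal.ofReal_div_of_pos hcd']

lemma measure_mem_and_add_mem_le [IsFiniteMeasure μ] {X Y : Ω → ℝ} (hX : Measurable X)
    (hY : Measurable Y) (hXY : IndepFun X Y μ) {S A : Set ℝ} (hS : MeasurableSet S)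
    (hA : MeasurableSet A) {c : ℝ≥0∞} (hc : ∀ t, μ {ω | t + Y ω ∈ A} ≤ c) :
    μ {ω | X ω ∈ S ∧ X ω + Y ω ∈ A} ≤ c * μ (X ⁻¹' S) := by
  set C : Set (ℝ × ℝ) := Prod.fst ⁻¹' S ∩ (fun p => p.1 + p.2) ⁻¹' A
  have hC : MeasurableSet C :=
    (measurable_fst hS).inter ((measurable_fst.add measurable_snd) hA)
  have hpair : Measurable fun ω => (X ω, Y ω) := hX.prodMk hY
  have hslice : ∀ t, (μ.map Y) (Prod.mk t ⁻¹' C) ≤ S.indicator (fun _ => c) t := by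
    intro t
    by_cases ht : t ∈ S
    · rw [indicator_of_mem ht]
      have hsub : Prod.mk t ⁻¹' C ⊆ (t + ·) ⁻¹' A := fun y hy => hy.2
      refine (measure_mono hsub).trans ?_
      rw [Measure.map_apply hY (measurable_const_add t hA)]
      exact hc t
    · have hempty : Prod.mk t ⁻¹' C = ∅ := eq_empty_of_forall_notMem fun y hy => ht hy.1
      rw [hempty, measure_empty]
      exact zero_le
  calc μ {ω | X ω ∈ S ∧ X ω + Y ω ∈ A}
      = (μ.map X).prod (μ.map Y) C := by
        rw [← (indepFun_iff_map_prod_eq_prod_map_map hX.aemeasurable hY.aemeasurable).1 hXY,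
          Measure.map_apply hpair hC]
        rfl
    _ = ∫⁻ t, (μ.map Y) (Prod.mk t ⁻¹' C) ∂(μ.map X) := Measure.prod_apply hC
    _ ≤ ∫⁻ t, S.indicator (fun _ => c) t ∂(μ.map X) := lintegral_mono hslice
    _ = c * μ (X ⁻¹' S) := by
        rw [lintegral_indicator hS, setLIntegral_const, Measure.map_apply hX hS]

end Probability

theorem stmt_0_general {Ω : Type*} [MeasurableSpace Ω] (μ : Measure Ω) [IsProbabilityMeasure μ]
    (a b W : ℝ) (ha : 0 ≤ a) (hW : 0 < W)
    (x : ℕ → Ω → ℝ) (hmeas : ∀ i, Measurable (x i))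
    (hindep : iIndepFun x μ)
    (hunif : ∀ i, pdf.IsUniform (x i) (Set.Ioo (W / 2) W) μ) :
    μ {ω | ∃ j : ℕ, (∑ i ∈ Finset.range (j + 1), x i ω) ∈ Set.Icc a b}
      ≤ ENNReal.ofReal (4 * (b - a) / W) := by
  have hsteps : ∀ᵐ ω ∂μ, ∀ i, x i ω ∈ Ioo (W / 2) W := ae_all_iff.2 fun i =>
    (hunif i).ae_mem ((Measure.measure_Ioo_pos _).2 (by linarith)).ne' measure_Ioo_lt_top.ne
      measurableSet_Ioo
  set S : ℕ → Ω → ℝ := fun k => ∑ i ∈ Finset.range k, x i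
  have hS : ∀ k, Measurable (S k) := fun k =>
    show Measurable (∑ i ∈ Finset.range k, x i) from
      Finset.sum_fn (Finset.range k) x ▸ Finset.measurable_sum _ fun i _ => hmeas i
  set entry : ℕ → Set Ω := fun k => {ω | S k ω ∈ Icc (a - W) a ∧ S k ω + x k ω ∈ Icc a b}
  have hcover : {ω | ∃ j : ℕ, (∑ i ∈ Finset.range (j + 1), x i ω) ∈ Set.Icc a b}
      ≤ᵐ[μ] ⋃ k, entry k := by
    filter_upwards [hsteps] with ω hω hhit
    obtain ⟨k, hk⟩ := exists_sum_range_mem_Icc_sub_and_add_mem_Icc ha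
      (fun i => ⟨by linarith [(hω i).1], (hω i).2.le⟩) hhit
    exact mem_iUnion.2 ⟨k, by simpa only [entry, S, mem_ofPred_eq, Finset.sum_apply] using hk⟩
  have hentry (k : ℕ) : μ (entry k) ≤
      ENNReal.ofReal ((b - a) / (W - W / 2)) * μ (S k ⁻¹' Icc (a - W) a) :=
    measure_mem_and_add_mem_le (hS k) (hmeas k)
      (hindep.indepFun_finsetSum_of_notMem hmeas Finset.notMem_range_self) measurableSet_Icc
      measurableSet_Icc ((hunif k).measure_const_add_mem_Icc_le (by linarith) a b)
  have hvisits : ∑' k, μ (S k ⁻¹' Icc (a - W) a) ≤ 2 := by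
    simpa using tsum_measure_le_of_ae_encard_le
      (fun k => hS k measurableSet_Icc) (n := 2) (hsteps.mono fun ω hω => by
        simpa [S, Finset.sum_apply] using encard_setOf_sum_range_mem_Icc_le_two (u := a - W)
          (v := a) (fun i => (hω i).1) (by linarith))
  calc μ {ω | ∃ j : ℕ, (∑ i ∈ Finset.range (j + 1), x i ω) ∈ Set.Icc a b}
      ≤ ∑' k, μ (entry k) := (measure_mono_ae hcover).trans (measure_iUnion_le _)
    _ ≤ ENNReal.ofReal ((b - a) / (W - W / 2)) * ∑' k, μ (S k ⁻¹' Icc (a - W) a) := by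
        rw [← ENNReal.tsum_mul_left]; exact ENNReal.tsum_le_tsum hentry
    _ ≤ ENNReal.ofReal ((b - a) / (W - W / 2)) * 2 := by gcongr
    _ = ENNReal.ofReal (4 * (b - a) / W) := by
        rw [← ENNReal.ofReal_ofNat 2, ← ENNReal.ofReal_mul' zero_le_two]
        congr 1
        field_simp
        ring

/-- Fix reals `0 ≤ a < b` and `W > 0`. If `x 0, x 1, …` are i.i.d. uniform on `(W/2, W)`,
then the probability that some partial sum `x 0 + ⋯ + x j` lies in `[a, b]`
is at most `4 (b - a) / W`. -/
theorem stmt_0 {Ω : Type*} [MeasurableSpace Ω] (μ : Measure Ω) [IsProbabilityMeasure μ]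
    (a b W : ℝ) (ha : 0 ≤ a) (hab : a < b) (hW : 0 < W)
    (x : ℕ → Ω → ℝ) (hmeas : ∀ i, Measurable (x i))
    (hindep : iIndepFun x μ)
    (hunif : ∀ i, pdf.IsUniform (x i) (Set.Ioo (W / 2) W) μ) :
    μ {ω | ∃ j : ℕ, (∑ i ∈ Finset.range (j + 1), x i ω) ∈ Set.Icc a b}
      ≤ ENNReal.ofReal (4 * (b - a) / W) :=
  stmt_0_general μ a b W ha hW x hmeas hindep hunif
end

section
/- Fix positive integers $y$ and $N$. Let $x_1, x_2, \ldots$ be sampled uniformly and independently from the integer interval $[\lceil N/4 \rceil, \lceil N/3 \rceil] \cap \mathbb{N}$. Then the probability that there exists an index $j$ with $\sum_{i \le j} x_i = y$ is at most $100/N$. -/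
open MeasureTheory ProbabilityTheory
open scoped ENNReal

/-!
Write `S j = x 0 + ⋯ + x (j - 1)`, let `k` be the number of values, each of probability `1 / k`,
and `[a, b]` their range, so that `b < 2a` once `N ≥ 6`. If `S (j + 1) = y` then `S j` lies in the
window `[y - b, y - a]`, and by independence of `S j` and `x j`,
`P(S (j + 1) = y) ≤ P(S j ∈ window) / k`. Since `S` grows by at least `a > b - a` at each step,
at most one `S j` lies in the window, so summing over `j` gives `P(∃ j, S (j + 1) = y) ≤ 1 / k`,
and `k ≥ N / 12`.
-/

section PartialSums

variable {Ω : Type*} {x : ℕ → Ω → ℕ} {a b : ℕ}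

def partialSum (x : ℕ → Ω → ℕ) (j : ℕ) (ω : Ω) : ℕ := ∑ i ∈ Finset.range j, x i ω

lemma partialSum_succ (j : ℕ) (ω : Ω) : partialSum x (j + 1) ω = partialSum x j ω + x j ω :=
  Finset.sum_range_succ _ _

lemma partialSum_add_le_of_lt (hx : ∀ i ω, a ≤ x i ω) (ω : Ω) {j j' : ℕ} (hjj' : j < j') :
    partialSum x j ω + a ≤ partialSum x j' ω :=
  calc partialSum x j ω + a ≤ partialSum x (j + 1) ω := by
        rw [partialSum_succ]; exact Nat.add_le_add_left (hx j ω) _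
    _ ≤ partialSum x j' ω :=
        Finset.sum_le_sum_of_subset (Finset.range_subset_range.mpr hjj')

lemma pairwise_disjoint_partialSum_mem_Icc (hb : b < 2 * a) (hx : ∀ i ω, a ≤ x i ω) (y : ℕ) :
    Pairwise (Function.onFun Disjoint
      fun j ↦ partialSum x j ⁻¹' Finset.Icc (y - b) (y - a)) := by
  refine (pairwise_disjoint_on _).mpr fun j j' hjj' ↦ ?_
  refine Set.disjoint_left.mpr fun ω hj hj' ↦ ?_
  simp only [Set.mem_preimage, Finset.coe_Icc, Set.mem_Icc] at hj hj'
  have := partialSum_add_le_of_lt hx ω hjj'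
  omega

variable [MeasurableSpace Ω] {μ : Measure Ω}

lemma measurable_partialSum (hmeas : ∀ i, Measurable (x i)) (j : ℕ) :
    Measurable (partialSum x j) :=
  Finset.measurable_sum _ fun i _ ↦ hmeas i

lemma measure_partialSum_succ_eq_le (hmeas : ∀ i, Measurable (x i)) (hindep : iIndepFun x μ)
    (hx : ∀ i ω, x i ω ∈ Set.Icc a b) {p : ℝ≥0∞} (hp : ∀ i t, μ (x i ⁻¹' {t}) ≤ p) (y j : ℕ) :
    μ (partialSum x (j + 1) ⁻¹' {y}) ≤ p * μ (partialSum x j ⁻¹' Finset.Icc (y - b) (y - a)) := by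
  have hindepS : IndepFun (partialSum x j) (x j) μ := by
    convert hindep.indepFun_finsetSum_of_notMem hmeas Finset.notMem_range_self using 1
    ext ω
    exact (Finset.sum_apply ω _ _).symm
  have hsub : partialSum x (j + 1) ⁻¹' {y}
      ⊆ ⋃ s ∈ Finset.Icc (y - b) (y - a), partialSum x j ⁻¹' {s} ∩ x j ⁻¹' {y - s} := by
    intro ω hω
    have := hx j ω
    simp only [Set.mem_preimage, Set.mem_singleton_iff, partialSum_succ] at hω
    simp only [Set.mem_iUnion, Set.mem_inter_iff, Set.mem_preimage, Set.mem_singleton_iff,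
      Finset.mem_Icc, Set.mem_Icc] at this ⊢
    exact ⟨partialSum x j ω, by omega, rfl, by omega⟩
  calc μ (partialSum x (j + 1) ⁻¹' {y})
      ≤ ∑ s ∈ Finset.Icc (y - b) (y - a), μ (partialSum x j ⁻¹' {s} ∩ x j ⁻¹' {y - s}) :=
        (measure_mono hsub).trans (measure_biUnion_finset_le _ _)
    _ = ∑ s ∈ Finset.Icc (y - b) (y - a), μ (partialSum x j ⁻¹' {s}) * μ (x j ⁻¹' {y - s}) :=
        Finset.sum_congr rfl fun s _ ↦ hindepS.measure_inter_preimage_eq_mul _ _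
          (measurableSet_singleton _) (measurableSet_singleton _)
    _ ≤ ∑ s ∈ Finset.Icc (y - b) (y - a), μ (partialSum x j ⁻¹' {s}) * p :=
        Finset.sum_le_sum fun s _ ↦ mul_le_mul_right (hp _ _) _
    _ = p * μ (partialSum x j ⁻¹' Finset.Icc (y - b) (y - a)) := by
        rw [← Finset.sum_mul, mul_comm, sum_measure_preimage_singleton _
          fun s _ ↦ measurable_partialSum hmeas j (measurableSet_singleton s)]

theorem measure_exists_partialSum_eq_le_of_forall_mem_Icc [IsProbabilityMeasure μ]
    (hmeas : ∀ i, Measurable (x i)) (hindep : iIndepFun x μ) (hb : b < 2 * a)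
    (hx : ∀ i ω, x i ω ∈ Set.Icc a b) {p : ℝ≥0∞} (hp : ∀ i t, μ (x i ⁻¹' {t}) ≤ p) (y : ℕ) :
    μ {ω | ∃ j, partialSum x (j + 1) ω = y} ≤ p := by
  have hunion : {ω | ∃ j, partialSum x (j + 1) ω = y} = ⋃ j, partialSum x (j + 1) ⁻¹' {y} := by
    ext ω; simp
  calc μ {ω | ∃ j, partialSum x (j + 1) ω = y}
      ≤ ∑' j, μ (partialSum x (j + 1) ⁻¹' {y}) := hunion ▸ measure_iUnion_le _
    _ ≤ ∑' j, p * μ (partialSum x j ⁻¹' Finset.Icc (y - b) (y - a)) :=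
        ENNReal.tsum_le_tsum fun j ↦ measure_partialSum_succ_eq_le hmeas hindep hx hp y j
    _ = p * μ (⋃ j, partialSum x j ⁻¹' Finset.Icc (y - b) (y - a)) := by
        rw [ENNReal.tsum_mul_left, measure_iUnion
          (pairwise_disjoint_partialSum_mem_Icc hb (fun i ω ↦ (hx i ω).1) y)
          fun j ↦ measurable_partialSum hmeas j (Finset.measurableSet _)]
    _ ≤ p := mul_le_of_le_one_right' prob_le_one

theorem measure_exists_partialSum_eq_le [IsProbabilityMeasure μ]
    (hmeas : ∀ i, Measurable (x i)) (hindep : iIndepFun x μ) (hb : b < 2 * a)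
    (hx : ∀ i, ∀ᵐ ω ∂μ, x i ω ∈ Set.Icc a b) {p : ℝ≥0∞} (hp : ∀ i t, μ (x i ⁻¹' {t}) ≤ p)
    (y : ℕ) :
    μ {ω | ∃ j, partialSum x (j + 1) ω = y} ≤ p := by
  have hab : a ≤ b := by
    obtain ⟨ω, hω⟩ := (hx 0).exists
    exact hω.1.trans hω.2
  -- clamping into `[a, b]` changes the `x i` only on a null set
  let x' : ℕ → Ω → ℕ := fun i ω ↦ max a (min b (x i ω))
  have hx'x : ∀ i, x' i =ᵐ[μ] x i := fun i ↦ (hx i).mono fun ω hω ↦ by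
    simp only [x', Set.mem_Icc] at hω ⊢; omega
  have hevent : {ω | ∃ j, partialSum x' (j + 1) ω = y} =ᵐ[μ]
      {ω | ∃ j, partialSum x (j + 1) ω = y} := by
    filter_upwards [ae_all_iff.mpr hx'x] with ω hω
    change (∃ j, _) = (∃ j, _)
    simp only [partialSum, hω]
  rw [← measure_congr hevent]
  exact measure_exists_partialSum_eq_le_of_forall_mem_Icc
    (fun i ↦ measurable_from_top.comp (hmeas i))
    (hindep.comp (fun _ v ↦ max a (min b v)) fun _ ↦ measurable_from_top) hb
    (fun i ω ↦ ⟨le_max_left _ _, max_le hab (min_le_left _ _)⟩)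
    (fun i t ↦ (measure_congr ((hx'x i).preimage {t})).trans_le (hp i t)) y

end PartialSums

section UniformOn

variable {Ω α : Type*} [MeasurableSpace Ω] [MeasurableSpace α] [MeasurableSingletonClass α]
  {μ : Measure Ω} {X : Ω → α} {s : Finset α}

lemma ae_mem_of_map_eq_uniformOn (hX : Measurable X) (h : μ.map X = uniformOn ↑s) :
    ∀ᵐ ω ∂μ, X ω ∈ s := by
  refine ae_of_ae_map hX.aemeasurable ?_
  rw [h, ae_iff, uniformOn_eq_zero_iff s.finite_toSet]
  ext; simp

lemma measure_preimage_singleton_le_of_map_eq_uniformOn (hX : Measurable X)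
    (h : μ.map X = uniformOn ↑s) (t : α) : μ (X ⁻¹' {t}) ≤ (s.card : ℝ≥0∞)⁻¹ := by
  classical
  rw [← Measure.map_apply hX (measurableSet_singleton t), h, ← Finset.coe_singleton,
    uniformOn_apply_finset, ENNReal.div_eq_inv_mul]
  refine mul_le_of_le_one_right' ?_
  exact_mod_cast Finset.card_le_one.mpr fun _ h₁ _ h₂ ↦
    (Finset.mem_singleton.mp (Finset.mem_inter.mp h₁).2).trans
      (Finset.mem_singleton.mp (Finset.mem_inter.mp h₂).2).symm

end UniformOn

lemma ceil_div_three_lt_two_mul_ceil_div_four {N : ℕ} (hN : 6 ≤ N) :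
    ⌈(N : ℝ) / 3⌉₊ < 2 * ⌈(N : ℝ) / 4⌉₊ := by
  have h3 := Nat.ceil_lt_add_one (show (0 : ℝ) ≤ N / 3 by positivity)
  have h4 := Nat.le_ceil ((N : ℝ) / 4)
  have h6 : (6 : ℝ) ≤ N := by exact_mod_cast hN
  exact_mod_cast (by linarith : (⌈(N : ℝ) / 3⌉₊ : ℝ) < 2 * ⌈(N : ℝ) / 4⌉₊)

lemma div_twelve_le_card_Icc_ceil (N : ℕ) :
    (N : ℝ) / 12 ≤ (Finset.Icc ⌈(N : ℝ) / 4⌉₊ ⌈(N : ℝ) / 3⌉₊).card := by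
  have h4 := Nat.ceil_lt_add_one (show (0 : ℝ) ≤ N / 4 by positivity)
  have h3 := Nat.le_ceil ((N : ℝ) / 3)
  have hle : ⌈(N : ℝ) / 4⌉₊ ≤ ⌈(N : ℝ) / 3⌉₊ + 1 := by
    have : (⌈(N : ℝ) / 4⌉₊ : ℝ) < ⌈(N : ℝ) / 3⌉₊ + 1 + 1 := by linarith
    exact Nat.lt_add_one_iff.mp (by exact_mod_cast this)
  rw [Nat.card_Icc, Nat.cast_sub hle]
  push_cast
  linarith

theorem stmt_1_general {Ω : Type*} [MeasurableSpace Ω] (μ : Measure Ω) [IsProbabilityMeasure μ]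
    (y N : ℕ) (hN : 0 < N)
    (x : ℕ → Ω → ℕ) (hmeas : ∀ i, Measurable (x i))
    (hindep : iIndepFun x μ)
    (hunif : ∀ i, μ.map (x i) =
      uniformOn (↑(Finset.Icc ⌈(N : ℝ) / 4⌉₊ ⌈(N : ℝ) / 3⌉₊))) :
    μ {ω | ∃ j : ℕ, (∑ i ∈ Finset.range (j + 1), x i ω) = y}
      ≤ ENNReal.ofReal (100 / N) := by
  have hNpos : (0 : ℝ) < N := by exact_mod_cast hN
  by_cases hsmall : N ≤ 100
  · refine prob_le_one.trans (ENNReal.one_le_ofReal.mpr ?_)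
    rw [le_div_iff₀ hNpos, one_mul]
    exact_mod_cast hsmall
  set s := Finset.Icc ⌈(N : ℝ) / 4⌉₊ ⌈(N : ℝ) / 3⌉₊
  have hs : (N : ℝ) / 12 ≤ s.card := div_twelve_le_card_Icc_ceil N
  calc μ {ω | ∃ j, partialSum x (j + 1) ω = y}
      ≤ (s.card : ℝ≥0∞)⁻¹ :=
        measure_exists_partialSum_eq_le hmeas hindep
          (ceil_div_three_lt_two_mul_ceil_div_four (by omega))
          (fun i ↦ (ae_mem_of_map_eq_uniformOn (hmeas i) (hunif i)).mono
            fun _ h ↦ Finset.mem_Icc.mp h)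
          (fun i ↦ measure_preimage_singleton_le_of_map_eq_uniformOn (hmeas i) (hunif i)) y
    _ = ENNReal.ofReal (s.card : ℝ)⁻¹ := by
        rw [ENNReal.ofReal_inv_of_pos (by linarith [div_pos hNpos (by norm_num : (0 : ℝ) < 12)]),
          ENNReal.ofReal_natCast]
    _ ≤ ENNReal.ofReal (100 / N) := by
        refine ENNReal.ofReal_le_ofReal ?_
        calc (s.card : ℝ)⁻¹ ≤ ((N : ℝ) / 12)⁻¹ := inv_anti₀ (by positivity) hs
          _ = 12 / N := inv_div _ _
          _ ≤ 100 / N := by gcongr; norm_num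

/-- Fix positive integers `y, N`. If `x 0, x 1, …` are i.i.d. uniform on the set of
integers in `[⌈N/4⌉, ⌈N/3⌉]`, then the probability that some partial sum
`x 0 + ⋯ + x j` equals `y` is at most `100 / N`. -/
theorem stmt_1 {Ω : Type*} [MeasurableSpace Ω] (μ : Measure Ω) [IsProbabilityMeasure μ]
    (y N : ℕ) (hy : 0 < y) (hN : 0 < N)
    (x : ℕ → Ω → ℕ) (hmeas : ∀ i, Measurable (x i))
    (hindep : iIndepFun x μ)
    (hunif : ∀ i, μ.map (x i) =
      uniformOn (↑(Finset.Icc ⌈(N : ℝ) / 4⌉₊ ⌈(N : ℝ) / 3⌉₊))) :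
    μ {ω | ∃ j : ℕ, (∑ i ∈ Finset.range (j + 1), x i ω) = y}
      ≤ ENNReal.ofReal (100 / N) :=
  stmt_1_general μ y N hN x hmeas hindep hunif
end

section
/- Let $\varepsilon > 0$ with $\varepsilon^{-1/2} \in 4\mathbb{N}$, set $n = \varepsilon^{-1/2}/4$, $s_1 = \varepsilon^{1/2} + 2\varepsilon$, and $s_2 = \varepsilon^{1/2}$. Then for all integers $\lambda_1, \lambda_2 \in [0, n]$ not both zero, $|\lambda_1 s_1 - \lambda_2 s_2| \ge 2\varepsilon$. -/
/-- Let `ε > 0` with `ε^{-1/2} ∈ 4ℕ`, let `n = ε^{-1/2}/4`, `s₁ = ε^{1/2} + 2ε`,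
`s₂ = ε^{1/2}`. Then for all integers `λ₁, λ₂ ∈ [0, n]` not both zero,
`|λ₁ s₁ - λ₂ s₂| ≥ 2ε`. -/
theorem stmt_10 (ε : ℝ) (hε : 0 < ε) (k : ℕ) (hk : 0 < k)
    (hpow : (Real.sqrt ε)⁻¹ = 4 * (k : ℝ))
    (lam₁ lam₂ : ℕ)
    (h₁ : (lam₁ : ℝ) ≤ (Real.sqrt ε)⁻¹ / 4) (h₂ : (lam₂ : ℝ) ≤ (Real.sqrt ε)⁻¹ / 4)
    (hne : ¬(lam₁ = 0 ∧ lam₂ = 0)) :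
    2 * ε ≤ |(lam₁ : ℝ) * (Real.sqrt ε + 2 * ε) - (lam₂ : ℝ) * Real.sqrt ε| := by
  set s := Real.sqrt ε with hsdef
  have hs : 0 < s := Real.sqrt_pos.mpr hε
  have hε' : s * s = ε := Real.mul_self_sqrt hε.le
  have hsk : s * (4 * k) = 1 := by
    rw [← hpow]; field_simp
  have hk1 : (1:ℝ) ≤ k := by exact_mod_cast hk
  have hs4 : s ≤ 1/4 := by nlinarith
  rw [hpow] at h₁ h₂
  have h₁' : (lam₁ : ℝ) ≤ k := by linarith
  have h₂' : (lam₂ : ℝ) ≤ k := by linarith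
  rcases lt_trichotomy lam₁ lam₂ with h | h | h
  · have hl : (lam₁ : ℝ) + 1 ≤ lam₂ := by exact_mod_cast h
    rw [le_abs]
    right
    nlinarith [mul_nonneg (sub_nonneg.mpr h₁') (mul_pos hs hs).le,
      mul_nonneg (sub_nonneg.mpr (by linarith : (lam₁:ℝ)+1 ≤ lam₂)) hs.le,
      mul_nonneg hs.le (by linarith : (0:ℝ) ≤ 1/4 - s)]
  · have hl : 1 ≤ lam₁ := by
      rcases Nat.eq_zero_or_pos lam₁ with h0 | h0
      · exact absurd ⟨h0, by omega⟩ hne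
      · exact h0
    have hl' : (1:ℝ) ≤ lam₁ := by exact_mod_cast hl
    rw [le_abs]
    left
    have : (lam₂ : ℝ) = lam₁ := by exact_mod_cast h.symm
    nlinarith
  · have hl : (lam₂ : ℝ) + 1 ≤ lam₁ := by exact_mod_cast h
    rw [le_abs]
    left
    nlinarith [mul_nonneg (sub_nonneg.mpr hl) hs.le,
      mul_nonneg hs.le (by linarith : (0:ℝ) ≤ 1/4 - s),
      mul_nonneg (Nat.cast_nonneg lam₁ : (0:ℝ) ≤ lam₁) (mul_pos hs hs).le]
end
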